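/- If G = F ∘ u where u(s,t) = (s, s·t), F : Δ → ℝ² is C^k and regular (invertible differential) on the triangle Δ, and f = ρ ∘ u with ρ : Δ → ℝ a C^k function, then the isogeometric function φ = f ∘ G⁻¹ = ρ ∘ F⁻¹ extends to a C^k function on the closed image F(Δ), despite G being singular along s = 0. -/

import Mathlib

/-!
The singularity of `G` along `s = 0` is irrelevant: take `φ = ρ ∘ F⁻¹`, with `F⁻¹` the inverse
of `F` on `Δ`. As `F` is continuous and injective on the compact set `Δ`, `F⁻¹` is continuous on
`F(Δ)`; so near `F(a)` it takes values near `a`, where it agrees with the `C^k` local inverse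
that the inverse function theorem provides at the regular point `a`.
-/

open Set Filter Topology Function

theorem IsCompact.continuousOn_of_leftInvOn {X Y : Type*} [TopologicalSpace X]
    [TopologicalSpace Y] [T2Space Y] {f : X → Y} {g : Y → X} {K : Set X} (hK : IsCompact K)
    (hf : ContinuousOn f K) (hgf : LeftInvOn g f K) : ContinuousOn g (f '' K) := by
  refine continuousOn_iff_isClosed.mpr fun t ht => ⟨f '' (t ∩ K), ?_, ?_⟩
  · exact ((hK.inter_left ht).image_of_continuousOn (hf.mono inter_subset_right)).isClosed
  · ext y
    constructor
    · rintro ⟨hyt, x, hx, rfl⟩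
      exact ⟨⟨x, ⟨by rwa [mem_preimage, hgf hx] at hyt, hx⟩, rfl⟩, x, hx, rfl⟩
    · rintro ⟨⟨x', ⟨hx't, hx'⟩, hfx'⟩, x, hx, rfl⟩
      refine ⟨?_, x, hx, rfl⟩
      rwa [mem_preimage, hgf hx, ← hgf.injOn hx' hx hfx']

section InverseFunction

variable {𝕂 : Type*} [RCLike 𝕂] {E F : Type*} [NormedAddCommGroup E] [NormedSpace 𝕂 E]
  [CompleteSpace E] [NormedAddCommGroup F] [NormedSpace 𝕂 F] {n : WithTop ℕ∞}

theorem ContDiffAt.contDiffWithinAt_of_leftInvOn {f : E → F} {g : F → E} {s : Set E} {a : E}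
    {f' : E ≃L[𝕂] F} (hf : ContDiffAt 𝕂 n f a) (hf' : HasFDerivAt f (f' : E →L[𝕂] F) a)
    (hn : n ≠ 0) (hg : ContinuousWithinAt g (f '' s) (f a)) (hgf : LeftInvOn g f s)
    (ha : a ∈ s) : ContDiffWithinAt 𝕂 n g (f '' s) (f a) := by
  set r := hf.localInverse hf' hn
  have hr_left : ∀ᶠ x in 𝓝 a, r (f x) = x :=
    (hf.hasStrictFDerivAt' hf' hn).eventually_left_inverse
  have hg_near : Tendsto g (𝓝[f '' s] (f a)) (𝓝 a) := by
    simpa only [hgf ha] using hg.tendsto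
  have hgr : g =ᶠ[𝓝[f '' s] (f a)] r := by
    filter_upwards [hg_near.eventually hr_left, self_mem_nhdsWithin]
      with y hy ⟨x, hx, hxy⟩
    subst hxy
    rw [hgf hx] at hy ⊢
    exact hy.symm
  refine (hf.to_localInverse hf' hn).contDiffWithinAt.congr_of_eventuallyEq hgr ?_
  rw [hgf ha, hf.localInverse_apply_image hf' hn]

theorem IsCompact.contDiffOn_of_leftInvOn [FiniteDimensional 𝕂 E] {f g : E → E} {K : Set E}
    (hK : IsCompact K) (hf : ∀ a ∈ K, ContDiffAt 𝕂 n f a)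
    (hdet : ∀ a ∈ K, LinearMap.det (fderiv 𝕂 f a : E →ₗ[𝕂] E) ≠ 0) (hgf : LeftInvOn g f K) :
    ContDiffOn 𝕂 n g (f '' K) := by
  have hg : ContinuousOn g (f '' K) :=
    hK.continuousOn_of_leftInvOn (fun a ha => (hf a ha).continuousAt.continuousWithinAt) hgf
  rcases eq_or_ne n 0 with rfl | hn
  · exact contDiffOn_zero.mpr hg
  rintro _ ⟨a, ha, rfl⟩
  have hdiff : HasFDerivAt f (fderiv 𝕂 f a) a :=
    ((hf a ha).differentiableAt hn).hasFDerivAt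
  rw [← ContinuousLinearMap.coe_toContinuousLinearEquivOfDetNeZero _ (hdet a ha)] at hdiff
  exact (hf a ha).contDiffWithinAt_of_leftInvOn hdiff hn (hg _ ⟨a, ha, rfl⟩) hgf ha

end InverseFunction

def unitTriangle : Set (ℝ × ℝ) := {q | 0 ≤ q.1 ∧ q.1 ≤ 1 ∧ 0 ≤ q.2 ∧ q.2 ≤ q.1}

theorem isCompact_unitTriangle : IsCompact unitTriangle := by
  have hclosed : IsClosed unitTriangle :=
    (isClosed_le continuous_const continuous_fst).inter <|
      (isClosed_le continuous_fst continuous_const).inter <|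
        (isClosed_le continuous_const continuous_snd).inter
          (isClosed_le continuous_snd continuous_fst)
  refine (isCompact_Icc (a := ((0 : ℝ), (0 : ℝ))) (b := (1, 1))).of_isClosed_subset hclosed ?_
  rintro q ⟨h0, h1, h2, h3⟩
  exact ⟨⟨h0, h2⟩, h1, h3.trans h1⟩

theorem mk_mul_mem_unitTriangle {p : ℝ × ℝ} (hp : p ∈ Icc (0 : ℝ) 1 ×ˢ Icc (0 : ℝ) 1) :
    (p.1, p.1 * p.2) ∈ unitTriangle :=
  ⟨hp.1.1, hp.1.2, mul_nonneg hp.1.1 hp.2.1, mul_le_of_le_one_right hp.1.1 hp.2.2⟩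

open Set in
/-- Let `Δ = {(u,v) : 0 ≤ u ≤ 1, 0 ≤ v ≤ u}` and `u(s,t) = (s, s·t)`, mapping
`[0,1]²` onto `Δ`. If `F` is `C^k` on a neighborhood of `Δ` with everywhere
invertible Jacobian, injective on `Δ`, and `ρ` is `C^k` there, then the
isogeometric function `φ = (ρ ∘ u) ∘ (F ∘ u)⁻¹ = ρ ∘ F⁻¹` extends to a `C^k`
function on the closed image `F(Δ)`, despite `F ∘ u` being singular along
`s = 0`: there is a `C^k` function `φ` on `F '' Δ` with `φ ∘ G = f` on
`[0,1]²`, where `G = F ∘ u` and `f = ρ ∘ u`. -/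
theorem stmt_19 (k : ℕ) (F : ℝ × ℝ → ℝ × ℝ) (ρ : ℝ × ℝ → ℝ) (U : Set (ℝ × ℝ))
    (hU : IsOpen U)
    (hΔU : {q : ℝ × ℝ | 0 ≤ q.1 ∧ q.1 ≤ 1 ∧ 0 ≤ q.2 ∧ q.2 ≤ q.1} ⊆ U)
    (hF : ContDiffOn ℝ k F U) (hρ : ContDiffOn ℝ k ρ U)
    (hreg : ∀ x ∈ {q : ℝ × ℝ | 0 ≤ q.1 ∧ q.1 ≤ 1 ∧ 0 ≤ q.2 ∧ q.2 ≤ q.1},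
      LinearMap.det ((fderiv ℝ F x : (ℝ × ℝ) →L[ℝ] (ℝ × ℝ)) :
        (ℝ × ℝ) →ₗ[ℝ] (ℝ × ℝ)) ≠ 0)
    (hinj : Set.InjOn F {q : ℝ × ℝ | 0 ≤ q.1 ∧ q.1 ≤ 1 ∧ 0 ≤ q.2 ∧ q.2 ≤ q.1}) :
    ∃ φ : ℝ × ℝ → ℝ,
      ContDiffOn ℝ k φ (F '' {q : ℝ × ℝ | 0 ≤ q.1 ∧ q.1 ≤ 1 ∧ 0 ≤ q.2 ∧ q.2 ≤ q.1}) ∧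
      ∀ p ∈ Set.Icc (0 : ℝ) 1 ×ˢ Set.Icc (0 : ℝ) 1,
        φ (F (p.1, p.1 * p.2)) = ρ (p.1, p.1 * p.2) := by
  change unitTriangle ⊆ U at hΔU
  have hFinv : LeftInvOn (invFunOn F unitTriangle) F unitTriangle := hinj.leftInvOn_invFunOn
  have hFinv_smooth : ContDiffOn ℝ k (invFunOn F unitTriangle) (F '' unitTriangle) :=
    isCompact_unitTriangle.contDiffOn_of_leftInvOn
      (fun a ha => hF.contDiffAt (hU.mem_nhds (hΔU ha))) hreg hFinv
  refine ⟨ρ ∘ invFunOn F unitTriangle,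
    hρ.comp hFinv_smooth ((surjOn_image F _).mapsTo_invFunOn.mono_right hΔU), fun p hp => ?_⟩
  rw [comp_apply, hFinv (mk_mul_mem_unitTriangle hp)]
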